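/- arXiv:1701.07521 — 2 statements merged into one kernel-verified Lean document; each statement's English description precedes it below -/
import Mathlib

section
/- Let q > 2 be a natural number, let S be the set of quadruples (a,b,c,d) of integers in {0,…,2q−1} with a − b − c + d ≡ 0 (mod 2q) and let T be the set of such quadruples with a − b − c + d ≢ 0 (mod 2q). For natural numbers x and y, consider the uniform distribution on Sˣ × Tʸ, and let N be the random variable counting the indices i (among the x + y coordinate quadruples) whose modulo-lifted quadruple satisfies (a mod q) − (b mod q) − (c mod q) + (d mod q) ≡ 0 (mod q). Then the expectation of N equals x + y/(2q−1). Equivalently, the sum of N over all elements of Sˣ × Tʸ equals (x + y/(2q−1))·(8q³)ˣ·(8q³(2q−1))ʸ. -/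
open Finset

/-- The finite set of exponent chains of length 4 for circulant size `2q`:
quadruples `(a,b,c,d)` of integers with `0 ≤ a,b,c,d ≤ 2q-1`. -/
noncomputable abbrev expChains (q : ℕ) : Finset (ℤ × ℤ × ℤ × ℤ) :=
  Finset.Icc (0:ℤ) (2 * q - 1) ×ˢ Finset.Icc (0:ℤ) (2 * q - 1) ×ˢ
    Finset.Icc (0:ℤ) (2 * q - 1) ×ˢ Finset.Icc (0:ℤ) (2 * q - 1)

/-- The chain forms a cycle for circulant size `2q`. -/
abbrev isCycle (q : ℕ) (x : ℤ × ℤ × ℤ × ℤ) : Prop :=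
  (x.1 - x.2.1 - x.2.2.1 + x.2.2.2) % (2 * q) = 0

/-- The modulo-lifted chain (entries `e mod q`) forms a cycle for circulant size `q`. -/
abbrev isModCycle (q : ℕ) (x : ℤ × ℤ × ℤ × ℤ) : Prop :=
  (x.1 % q - x.2.1 % q - x.2.2.1 % q + x.2.2.2 % q) % q = 0

/-! Every chain forming a cycle modulo `2q` also forms one modulo `q`. Among all chains, for
each `(a, b, c)` there is one `d ∈ [0, 2q)` with `2q ∣ a - b - c + d` and two with
`q ∣ a - b - c + d`, so `8q³` of the `8q³(2q - 1)` non-cycles become cycles after modulo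
lifting.
Summing over `Sˣ × Tʸ` is linear in the coordinates, and each coordinate contributes the fraction
of its factor that lifts to a cycle: `1` for `S` and `1 / (2q - 1)` for `T`. -/

abbrev chainSum (v : ℤ × ℤ × ℤ × ℤ) : ℤ := v.1 - v.2.1 - v.2.2.1 + v.2.2.2

lemma isCycle_iff_dvd (q : ℕ) (v : ℤ × ℤ × ℤ × ℤ) :
    isCycle q v ↔ 2 * (q : ℤ) ∣ chainSum v :=
  Int.dvd_iff_emod_eq_zero.symm

lemma isModCycle_iff_dvd (q : ℕ) (v : ℤ × ℤ × ℤ × ℤ) :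
    isModCycle q v ↔ (q : ℤ) ∣ chainSum v := by
  rw [chainSum, Int.dvd_iff_emod_eq_zero, isModCycle]
  simp [Int.sub_emod, Int.add_emod]

lemma isModCycle_of_isCycle {q : ℕ} {v : ℤ × ℤ × ℤ × ℤ} (h : isCycle q v) :
    isModCycle q v :=
  (isModCycle_iff_dvd q v).2 (dvd_trans (Dvd.intro_left 2 rfl) ((isCycle_iff_dvd q v).1 h))

lemma card_filter_dvd_add_Ico (m k v : ℤ) (hm : 0 < m) (hk : 0 ≤ k) :
    (#{d ∈ Ico 0 (m * k) | m ∣ v + d} : ℤ) = k := by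
  have hmodEq : ∀ d, m ∣ v + d ↔ d ≡ -v [ZMOD m] := fun d => by
    rw [Int.modEq_comm, Int.modEq_iff_dvd, sub_neg_eq_add, add_comm]
  simp_rw [hmodEq]
  rw [Int.Ico_filter_modEq_card _ _ hm]
  have hm' : (m : ℚ) ≠ 0 := by positivity
  push_cast
  rw [show ((m : ℚ) * k - -v) / m = v / m + (k : ℤ) by field_simp; ring,
    Int.ceil_add_intCast]
  simp [hk]

lemma card_filter_dvd_chainSum (m n : ℤ) (hm : 0 < m) (hmn : m ∣ n) (hn : 0 ≤ n) :
    (#{v ∈ Ico 0 n ×ˢ Ico 0 n ×ˢ Ico 0 n ×ˢ Ico 0 n | m ∣ chainSum v} : ℤ) =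
      n ^ 3 * (n / m) := by
  obtain ⟨k, rfl⟩ := hmn
  have hk : 0 ≤ k := nonneg_of_mul_nonneg_right hn hm
  have hlast : ∀ a b c : ℤ, (#{d ∈ Ico 0 (m * k) | m ∣ (a - b - c) + d} : ℤ) = k :=
    fun a b c => card_filter_dvd_add_Ico m k _ hm hk
  rw [card_filter]
  push_cast
  simp only [sum_product]
  simp only [sum_boole, hlast, sum_const, Int.card_Ico, nsmul_eq_mul]
  rw [Int.mul_ediv_cancel_left _ hm.ne', sub_zero, Int.toNat_of_nonneg hn]
  ring

lemma expChains_eq_Ico (q : ℕ) :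
    expChains q = Ico (0 : ℤ) (2 * q) ×ˢ Ico (0 : ℤ) (2 * q) ×ˢ
      Ico (0 : ℤ) (2 * q) ×ˢ Ico (0 : ℤ) (2 * q) := by
  have h : Icc (0 : ℤ) (2 * q - 1) = Ico 0 (2 * (q : ℤ)) := by
    ext; simp only [mem_Icc, mem_Ico]; omega
  rw [expChains, h]

lemma card_expChains (q : ℕ) : #(expChains q) = 16 * q ^ 4 := by
  simp only [expChains_eq_Ico, card_product, Int.card_Ico, sub_zero]
  rw [show (2 * (q : ℤ)).toNat = 2 * q by omega]
  ring

lemma card_filter_isCycle {q : ℕ} (hq : 0 < q) :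
    #{v ∈ expChains q | isCycle q v} = 8 * q ^ 3 := by
  have h := card_filter_dvd_chainSum (2 * q) (2 * q) (by positivity) dvd_rfl (by positivity)
  rw [Int.ediv_self (by positivity), ← expChains_eq_Ico] at h
  simp only [isCycle_iff_dvd]
  zify
  rw [h]
  ring

lemma card_filter_isModCycle {q : ℕ} (hq : 0 < q) :
    #{v ∈ expChains q | isModCycle q v} = 16 * q ^ 3 := by
  have h :=
    card_filter_dvd_chainSum q (2 * q) (by positivity) (Dvd.intro_left 2 rfl) (by positivity)
  rw [Int.mul_ediv_cancel _ (by positivity), ← expChains_eq_Ico] at h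
  simp only [isModCycle_iff_dvd]
  zify
  rw [h]
  ring

lemma card_filter_not_isCycle {q : ℕ} (hq : 0 < q) :
    #{v ∈ expChains q | ¬ isCycle q v} = 8 * q ^ 3 * (2 * q - 1) := by
  have h := card_filter_add_card_filter_not (s := expChains q) (fun v => isCycle q v)
  rw [card_filter_isCycle hq, card_expChains] at h
  zify [show 1 ≤ 2 * q by omega] at h ⊢
  linear_combination h

lemma card_filter_not_isCycle_isModCycle {q : ℕ} (hq : 0 < q) :
    #{v ∈ {v ∈ expChains q | ¬ isCycle q v} | isModCycle q v} = 8 * q ^ 3 := by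
  have hsub : {v ∈ {v ∈ expChains q | isModCycle q v} | isCycle q v} =
      {v ∈ expChains q | isCycle q v} := by
    rw [filter_filter]
    exact filter_congr fun v _ => ⟨And.right, fun h => ⟨isModCycle_of_isCycle h, h⟩⟩
  have h := card_filter_add_card_filter_not (s := {v ∈ expChains q | isModCycle q v})
    (fun v => isCycle q v)
  rw [hsub, card_filter_isCycle hq, card_filter_isModCycle hq, filter_filter] at h
  rw [filter_filter]
  simp_rw [and_comm (a := ¬ _)]
  omega

lemma sum_piFinset_card_filter {α ι : Type*} [Fintype ι] [DecidableEq ι] (s : Finset α)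
    (p : α → Prop) [DecidablePred p] :
    ∑ f ∈ Fintype.piFinset (fun _ : ι => s), #{i | p (f i)} =
      Fintype.card ι * #s ^ (Fintype.card ι - 1) * #{a ∈ s | p a} := by
  simp_rw [card_filter]
  rw [sum_comm]
  simp only [Fintype.sum_piFinset_apply (fun a => if p a then 1 else 0), sum_const, card_univ,
    smul_eq_mul]
  ring

lemma sum_sum_add {α β M : Type*} [AddCommMonoid M] (s : Finset α) (t : Finset β) (f : α → M)
    (g : β → M) :
    ∑ a ∈ s, ∑ b ∈ t, (f a + g b) = #t • ∑ a ∈ s, f a + #s • ∑ b ∈ t, g b := by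
  simp only [sum_add_distrib, sum_const, smul_sum]

lemma add_div_mul_pow_mul_pow {K : Type*} [Field K] (s d : K) (hd : d ≠ 0) (x y : ℕ) :
    (s * d) ^ y * (x * s ^ (x - 1) * s) + s ^ x * (y * (s * d) ^ (y - 1) * s) =
      (x + y / d) * s ^ x * (s * d) ^ y := by
  rcases x with _ | x <;> rcases y with _ | y <;> simp [pow_succ] <;> field_simp

/-- Expected number of 4-cycles after modulo lifting: over the uniform distribution on
`Sˣ × Tʸ` (where `S` = chains forming a cycle, `T` = chains not forming a cycle),
the sum of the number `N` of coordinates whose modulo lift forms a cycle equals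
`(x + y/(2q-1)) · |S|ˣ · |T|ʸ` with `|S| = 8q³`, `|T| = 8q³(2q-1)`. -/
theorem stmt_5 (q : ℕ) (hq : 2 < q) (x y : ℕ) :
    ∑ f ∈ Fintype.piFinset
        (fun _ : Fin x => (expChains q).filter (fun v => isCycle q v)),
      ∑ g ∈ Fintype.piFinset
          (fun _ : Fin y => (expChains q).filter (fun v => ¬ isCycle q v)),
        (((Finset.univ.filter (fun i : Fin x => isModCycle q (f i))).card +
          (Finset.univ.filter (fun j : Fin y => isModCycle q (g j))).card : ℕ) : ℚ) =
      ((x : ℚ) + y / (2 * q - 1)) *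
        (8 * q ^ 3 : ℚ) ^ x * (8 * q ^ 3 * (2 * q - 1) : ℚ) ^ y := by
  have hq0 : 0 < q := by omega
  have hS_mod : {v ∈ {v ∈ expChains q | isCycle q v} | isModCycle q v} =
      {v ∈ expChains q | isCycle q v} :=
    filter_true_of_mem fun v hv => isModCycle_of_isCycle (mem_filter.1 hv).2
  have h2q : (2 * q : ℚ) - 1 ≠ 0 := by
    have : (1 : ℚ) ≤ q := by exact_mod_cast hq0
    linarith
  simp_rw [← Nat.cast_sum]
  rw [sum_sum_add, sum_piFinset_card_filter _ (isModCycle q),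
    sum_piFinset_card_filter _ (isModCycle q)]
  simp only [Fintype.card_piFinset_const, hS_mod, Fintype.card_fin, card_filter_isCycle hq0,
    card_filter_not_isCycle hq0, card_filter_not_isCycle_isModCycle hq0, smul_eq_mul]
  push_cast [show 1 ≤ 2 * q by omega]
  exact add_div_mul_pow_mul_pow _ _ h2q x y
end

section
/- Let q > 2 be a natural number and let r be an integer with 0 < r < 2q and gcd(r, 2q) = 1. Among all quadruples (a,b,c,d) of integers with 0 ≤ a,b,c,d ≤ 2q−1, the number of quadruples satisfying both a − b − c + d ≡ 0 (mod 2q) and ⌊((ra) mod 2q)/2⌋ − ⌊((rb) mod 2q)/2⌋ − ⌊((rc) mod 2q)/2⌋ + ⌊((rd) mod 2q)/2⌋ ≡ 0 (mod q) equals 6q³. Consequently, a uniformly random exponent chain that forms a cycle for circulant size 2q forms a cycle after floor scale modulo lifting with scale r with probability 3/4. -/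
/-- The floor-scale-modulo lift of entry `e` to circulant size `q` with scale `r`:
`⌊((r·e) mod 2q)/2⌋`. -/
def fsmLift (q : ℕ) (r e : ℤ) : ℤ := (r * e % (2 * q)) / 2

/-- The floor-scale-modulo-lifted chain with scale `r` forms a cycle for circulant size `q`. -/
abbrev isFsmCycle (q : ℕ) (r : ℤ) (x : ℤ × ℤ × ℤ × ℤ) : Prop :=
  (fsmLift q r x.1 - fsmLift q r x.2.1 - fsmLift q r x.2.2.1 + fsmLift q r x.2.2.2) % q = 0

/-!
Multiplication by `r` permutes the residues modulo `2q` and preserves cycles, and the lift of a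
chain `x` is the halving of `r x mod 2q`. Substituting `y = r x mod 2q`, one counts the cycles
`y` modulo `2q` whose halves `⌊y / 2⌋` form a cycle modulo `q`. Writing `y = 2h + p` with
`h ∈ [0, q)⁴` and `p ∈ {0, 1}⁴`, the two conditions read `q ∣ altSum h` and
`2q ∣ 2 altSum h + altSum p`, i.e. `altSum p = 0` because `|altSum p| ≤ 2 < 2q`. There are `q³`
such `h` and `6` such `p`, while the cycles modulo `2q` number `(2q)³ = 8q³`.
-/

open Finset

namespace ExpChain

abbrev quad (s : Finset ℤ) : Finset (ℤ × ℤ × ℤ × ℤ) := s ×ˢ s ×ˢ s ×ˢ s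

def altSum (x : ℤ × ℤ × ℤ × ℤ) : ℤ := x.1 - x.2.1 - x.2.2.1 + x.2.2.2

def mapQuad (f : ℤ → ℤ) (x : ℤ × ℤ × ℤ × ℤ) : ℤ × ℤ × ℤ × ℤ :=
  (f x.1, f x.2.1, f x.2.2.1, f x.2.2.2)

lemma mapsTo_mapQuad {f : ℤ → ℤ} {s t : Finset ℤ} (h : Set.MapsTo f s t) :
    Set.MapsTo (mapQuad f) (quad s) (quad t) := by
  rintro ⟨a, b, c, d⟩ hx
  simp only [coe_product, Set.mem_prod, mem_coe] at hx ⊢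
  exact ⟨h hx.1, h hx.2.1, h hx.2.2.1, h hx.2.2.2⟩

lemma leftInvOn_mapQuad {f g : ℤ → ℤ} {s : Finset ℤ} (h : Set.LeftInvOn g f s) :
    Set.LeftInvOn (mapQuad g) (mapQuad f) (quad s) := by
  rintro ⟨a, b, c, d⟩ hx
  simp only [coe_product, Set.mem_prod, mem_coe] at hx
  simp only [mapQuad, h hx.1, h hx.2.1, h hx.2.2.1, h hx.2.2.2]

lemma card_filter_quad_eq_of_invOn {f g : ℤ → ℤ} {s t : Finset ℤ} (hf : Set.MapsTo f s t)
    (hg : Set.MapsTo g t s) (hinv : Set.InvOn g f s t) {P Q : ℤ × ℤ × ℤ × ℤ → Prop}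
    [DecidablePred P] [DecidablePred Q] (hPQ : ∀ x ∈ quad s, P x ↔ Q (mapQuad f x)) :
    #((quad s).filter P) = #((quad t).filter Q) := by
  apply card_nbij' (mapQuad f) (mapQuad g)
  · intro x hx
    rw [mem_coe, mem_filter] at hx ⊢
    exact ⟨mapsTo_mapQuad hf hx.1, (hPQ x hx.1).1 hx.2⟩
  · intro y hy
    rw [mem_coe, mem_filter] at hy ⊢
    have hx := mapsTo_mapQuad hg hy.1
    refine ⟨hx, (hPQ _ hx).2 ?_⟩
    rw [leftInvOn_mapQuad hinv.2 hy.1]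
    exact hy.2
  · exact (leftInvOn_mapQuad hinv.1).mono (coe_subset.2 (filter_subset _ _))
  · exact (leftInvOn_mapQuad hinv.2).mono (coe_subset.2 (filter_subset _ _))

lemma card_filter_dvd_altSum {n : ℤ} (hn : 0 < n) :
    (#((quad (Icc 0 (n - 1))).filter (n ∣ altSum ·)) : ℤ) = n ^ 3 := by
  suffices #((quad (Icc 0 (n - 1))).filter (n ∣ altSum ·)) =
      #(Icc 0 (n - 1) ×ˢ Icc 0 (n - 1) ×ˢ Icc 0 (n - 1)) by
    have hcard : (#(Icc 0 (n - 1)) : ℤ) = n := by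
      simp only [Int.card_Icc, sub_add_cancel, sub_zero]; omega
    rw [this, card_product, card_product]; push_cast; rw [hcard]; ring
  apply card_nbij' (fun x => x.2) (fun y => ((y.1 + y.2.1 - y.2.2) % n, y))
  · rintro ⟨a, b, c, d⟩ hx
    simp_all
  · rintro ⟨b, c, d⟩ hy
    simp only [mem_coe, mem_filter, mem_product, mem_Icc] at hy ⊢
    have h0 := Int.emod_nonneg (b + c - d) hn.ne'
    have h1 := Int.emod_lt_of_pos (b + c - d) hn
    refine ⟨⟨⟨h0, by omega⟩, hy⟩, ?_⟩
    convert (Int.mod_modEq (b + c - d) n).symm.dvd using 1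
    simp only [altSum]; ring
  · rintro ⟨a, b, c, d⟩ hx
    simp only [mem_coe, mem_filter, mem_product, mem_Icc] at hx
    obtain ⟨⟨ha, -⟩, k, hk⟩ := hx
    have : b + c - d = a + n * -k := by simp only [altSum] at hk; linarith
    dsimp only
    rw [this, Int.add_mul_emod_self_left, Int.emod_eq_of_lt ha.1 (by omega)]
  · intro y _
    rfl

lemma altSum_mapQuad_mul_emod (w n : ℤ) (x : ℤ × ℤ × ℤ × ℤ) :
    altSum (mapQuad (w * · % n) x) ≡ w * altSum x [ZMOD n] := by
  have h (e : ℤ) : w * e % n ≡ w * e [ZMOD n] := Int.mod_modEq _ _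
  obtain ⟨a, b, c, d⟩ := x
  convert (((h a).sub (h b)).sub (h c)).add (h d) using 1
  · rfl
  · simp only [altSum]; ring

lemma mul_emod_mul_emod_of_mem_Icc {n w z a : ℤ} (h : w * z ≡ 1 [ZMOD n])
    (ha : a ∈ Icc 0 (n - 1)) : w * (z * a % n) % n = a := by
  rw [mem_Icc] at ha
  calc w * (z * a % n) % n = w * (z * a) % n := (Int.mod_modEq _ _).mul_left w
    _ = w * z * a % n := by rw [mul_assoc]
    _ = 1 * a % n := h.mul_right a
    _ = a := by rw [one_mul, Int.emod_eq_of_lt ha.1 (by omega)]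

lemma invOn_mul_emod {n w z : ℤ} (h : w * z ≡ 1 [ZMOD n]) :
    Set.InvOn (z * · % n) (w * · % n) (Icc 0 (n - 1) : Finset ℤ) (Icc 0 (n - 1) : Finset ℤ) :=
  ⟨fun _ ha => mul_emod_mul_emod_of_mem_Icc (by rwa [mul_comm]) ha,
    fun _ ha => mul_emod_mul_emod_of_mem_Icc h ha⟩

lemma mapsTo_mul_emod {n : ℤ} (hn : 0 < n) (w : ℤ) (s : Finset ℤ) :
    Set.MapsTo (w * · % n) s (Icc 0 (n - 1) : Finset ℤ) := fun e _ => by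
  have := Int.emod_lt_of_pos (w * e) hn
  simp only [mem_coe, mem_Icc]
  exact ⟨Int.emod_nonneg _ hn.ne', by omega⟩

lemma isCycle_iff_dvd {q : ℕ} {x : ℤ × ℤ × ℤ × ℤ} : isCycle q x ↔ 2 * (q : ℤ) ∣ altSum x :=
  Int.dvd_iff_emod_eq_zero.symm

lemma isFsmCycle_iff_dvd {q : ℕ} {r : ℤ} {x : ℤ × ℤ × ℤ × ℤ} :
    isFsmCycle q r x ↔ (q : ℤ) ∣ altSum (mapQuad (· / 2) (mapQuad (r * · % (2 * q)) x)) :=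
  Int.dvd_iff_emod_eq_zero.symm

lemma card_filter_isCycle_and_isFsmCycle {q : ℕ} (hq : 0 < q) {r : ℤ}
    (hr : IsCoprime r (2 * q)) :
    #((expChains q).filter (fun x => isCycle q x ∧ isFsmCycle q r x)) =
      #((expChains q).filter
        (fun x => 2 * (q : ℤ) ∣ altSum x ∧ (q : ℤ) ∣ altSum (mapQuad (· / 2) x))) := by
  have hn : (0 : ℤ) < 2 * q := by positivity
  obtain ⟨u, v, huv⟩ := id hr
  have hru : r * u ≡ 1 [ZMOD 2 * q] := Int.modEq_iff_dvd.2 ⟨v, by linarith⟩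
  refine card_filter_quad_eq_of_invOn (mapsTo_mul_emod hn r _) (mapsTo_mul_emod hn u _)
    (invOn_mul_emod hru) fun x _ => and_congr ?_ isFsmCycle_iff_dvd
  calc isCycle q x ↔ 2 * (q : ℤ) ∣ altSum x := isCycle_iff_dvd
    _ ↔ 2 * (q : ℤ) ∣ r * altSum x := ⟨(Dvd.dvd.mul_left · r), hr.symm.dvd_of_dvd_mul_left⟩
    _ ↔ _ := (altSum_mapQuad_mul_emod r _ x).dvd_iff.symm

def parityChains : Finset (ℤ × ℤ × ℤ × ℤ) := (quad {0, 1}).filter (altSum · = 0)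

lemma card_parityChains : #parityChains = 6 := by decide

lemma two_mul_add_eq (h p : ℤ × ℤ × ℤ × ℤ) :
    2 * h + p = (2 * h.1 + p.1, 2 * h.2.1 + p.2.1, 2 * h.2.2.1 + p.2.2.1, 2 * h.2.2.2 + p.2.2.2) :=
  rfl

lemma altSum_two_mul_add (h p : ℤ × ℤ × ℤ × ℤ) :
    altSum (2 * h + p) = 2 * altSum h + altSum p := by
  rw [two_mul_add_eq, altSum, altSum, altSum]
  ring

lemma two_mul_mapQuad_ediv_add_mapQuad_emod (x : ℤ × ℤ × ℤ × ℤ) :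
    2 * mapQuad (· / 2) x + mapQuad (· % 2) x = x := by
  rw [two_mul_add_eq]
  ext <;> simp only [mapQuad] <;> omega

lemma abs_altSum_le_two {p : ℤ × ℤ × ℤ × ℤ} (hp : p ∈ quad {0, 1}) : |altSum p| ≤ 2 := by
  simp only [mem_product, mem_insert, mem_singleton] at hp
  rw [abs_le, altSum]
  omega

lemma mapQuad_ediv_two_two_mul_add {h p : ℤ × ℤ × ℤ × ℤ} (hp : p ∈ quad {0, 1}) :
    mapQuad (· / 2) (2 * h + p) = h := by
  simp only [mem_product, mem_insert, mem_singleton] at hp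
  rw [two_mul_add_eq]
  ext <;> simp only [mapQuad] <;> omega

lemma mapQuad_emod_two_two_mul_add {h p : ℤ × ℤ × ℤ × ℤ} (hp : p ∈ quad {0, 1}) :
    mapQuad (· % 2) (2 * h + p) = p := by
  simp only [mem_product, mem_insert, mem_singleton] at hp
  rw [two_mul_add_eq]
  ext <;> simp only [mapQuad] <;> omega

lemma two_mul_dvd_two_mul_add_iff {n s t : ℤ} (hn : 1 < n) (ht : |t| ≤ 2) (hs : n ∣ s) :
    2 * n ∣ 2 * s + t ↔ t = 0 := by
  rw [dvd_add_right (mul_dvd_mul_left 2 hs)]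
  exact ⟨fun h => Int.eq_zero_of_abs_lt_dvd h (by omega), fun h => h ▸ dvd_zero _⟩

lemma card_filter_dvd_altSum_and_dvd_altSum_half {n : ℤ} (hn : 1 < n) :
    #((quad (Icc 0 (2 * n - 1))).filter
        (fun x => 2 * n ∣ altSum x ∧ n ∣ altSum (mapQuad (· / 2) x))) =
      #((quad (Icc 0 (n - 1))).filter (n ∣ altSum ·)) * #parityChains := by
  rw [← card_product]
  apply card_nbij' (fun x => (mapQuad (· / 2) x, mapQuad (· % 2) x)) (fun y => 2 * y.1 + y.2)
  · intro x hx
    rw [mem_coe, mem_filter] at hx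
    obtain ⟨hx, hcyc, hhalf⟩ := hx
    rw [← two_mul_mapQuad_ediv_add_mapQuad_emod x, altSum_two_mul_add] at hcyc
    have hpar : mapQuad (· % 2) x ∈ quad {0, 1} :=
      mapsTo_mapQuad (fun e _ => by
        simp only [coe_pair, Set.mem_insert_iff, Set.mem_singleton_iff]; omega) hx
    have hI : mapQuad (· / 2) x ∈ quad (Icc 0 (n - 1)) :=
      mapsTo_mapQuad (fun e he => by simp only [coe_Icc, Set.mem_Icc] at he ⊢; omega) hx
    rw [mem_coe, mem_product, mem_filter, parityChains, mem_filter]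
    exact ⟨⟨hI, hhalf⟩, hpar,
      (two_mul_dvd_two_mul_add_iff hn (abs_altSum_le_two hpar) hhalf).1 hcyc⟩
  · rintro ⟨h, p⟩ hy
    rw [mem_coe, mem_product, mem_filter, parityChains, mem_filter] at hy
    obtain ⟨⟨hh, hcyc⟩, hp, hsum⟩ := hy
    rw [mem_coe, mem_filter, altSum_two_mul_add, mapQuad_ediv_two_two_mul_add hp,
      two_mul_dvd_two_mul_add_iff hn (abs_altSum_le_two hp) hcyc]
    refine ⟨?_, hsum, hcyc⟩
    obtain ⟨a, b, c, d⟩ := h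
    obtain ⟨e, f, g, i⟩ := p
    simp only [mem_product, mem_Icc, mem_insert, mem_singleton] at hh hp
    simp only [two_mul_add_eq, mem_product, mem_Icc]
    omega
  · intro x _
    exact two_mul_mapQuad_ediv_add_mapQuad_emod x
  · rintro ⟨h, p⟩ hy
    rw [mem_coe, mem_product, parityChains, mem_filter, mem_filter] at hy
    simp only [mapQuad_ediv_two_two_mul_add hy.2.1, mapQuad_emod_two_two_mul_add hy.2.1]

end ExpChain

open ExpChain

theorem stmt_9_general (q : ℕ) (hq : 2 < q) (r : ℤ) (hrcop : Int.gcd r (2 * q) = 1) :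
    ((expChains q).filter (fun x => isCycle q x ∧ isFsmCycle q r x)).card = 6 * q ^ 3 ∧
    (((expChains q).filter (fun x => isCycle q x ∧ isFsmCycle q r x)).card : ℚ) /
      (((expChains q).filter (fun x => isCycle q x)).card : ℚ) = 3 / 4 := by
  have hq0 : (0 : ℤ) < q := by omega
  have hlifted : (#((expChains q).filter (fun x => isCycle q x ∧ isFsmCycle q r x)) : ℤ) =
      6 * q ^ 3 := by
    rw [card_filter_isCycle_and_isFsmCycle (by omega) (Int.isCoprime_iff_gcd_eq_one.2 hrcop),
      card_filter_dvd_altSum_and_dvd_altSum_half (by omega), card_parityChains, Nat.cast_mul,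
      card_filter_dvd_altSum hq0]
    ring
  have hcycles : (#((expChains q).filter (fun x => isCycle q x)) : ℤ) = 8 * q ^ 3 := by
    rw [filter_congr fun x _ => isCycle_iff_dvd, card_filter_dvd_altSum (by positivity)]
    ring
  refine ⟨by exact_mod_cast hlifted, ?_⟩
  rw [show (#((expChains q).filter (fun x => isCycle q x ∧ isFsmCycle q r x)) : ℚ) =
      6 * q ^ 3 by exact_mod_cast hlifted,
    show (#((expChains q).filter (fun x => isCycle q x)) : ℚ) = 8 * q ^ 3 by
      exact_mod_cast hcycles]
  field_simp
  ring

/-- The number of exponent chains forming a cycle for circulant size `2q` whose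
floor-scale-modulo lift with scale `r` (`0 < r < 2q`, `gcd(r,2q)=1`) forms a cycle for
circulant size `q` is `6q³`; hence a uniformly random chain forming a cycle stays a
cycle after floor scale modulo lifting with probability `3/4`. -/
theorem stmt_9 (q : ℕ) (hq : 2 < q) (r : ℤ) (hr0 : 0 < r) (hr1 : r < 2 * q)
    (hrcop : Int.gcd r (2 * q) = 1) :
    ((expChains q).filter (fun x => isCycle q x ∧ isFsmCycle q r x)).card = 6 * q ^ 3 ∧
    (((expChains q).filter (fun x => isCycle q x ∧ isFsmCycle q r x)).card : ℚ) /
      (((expChains q).filter (fun x => isCycle q x)).card : ℚ) = 3 / 4 :=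
  stmt_9_general q hq r hrcop
end
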